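/- arXiv:2305.10081 — 2 statements merged into one kernel-verified Lean document; each statement's English description precedes it below -/
import Mathlib

section
/- Let A be a skew brace with A = B∘C, where B and C are trivial sub-skew braces, both B and C are normal subgroups of (A,∘), and both are right ideals in A. Then A*(A*A) = 1, i.e., A is left nilpotent of index at most 3. -/
/-- A skew brace: a set with two group operations `·` (from `Group A`) and `∘` (`circ`)
sharing the same identity, satisfying the brace relation. -/
class SkewBrace (A : Type*) extends Group A where
  circ : A → A → A
  circ_assoc : ∀ a b c : A, circ (circ a b) c = circ a (circ b c)
  one_circ : ∀ a : A, circ 1 a = a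
  circ_one : ∀ a : A, circ a 1 = a
  sinv : A → A
  sinv_circ : ∀ a : A, circ (sinv a) a = 1
  circ_sinv : ∀ a : A, circ a (sinv a) = 1
  brace : ∀ a b c : A, circ a (b * c) = circ a b * a⁻¹ * circ a c

namespace SkewBrace

variable {A : Type*} [SkewBrace A]

/-- `a * b = a⁻¹ (a ∘ b) b⁻¹` (inverses taken in `(A, ·)`). -/
def star (a b : A) : A := a⁻¹ * circ a b * b⁻¹

/-- The lambda map `λ_a(b) = a⁻¹ (a ∘ b)`. -/
def lam (a b : A) : A := a⁻¹ * circ a b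

/-- The lambda map of the opposite skew brace, `λᵒᵖ_a(b) = (a ∘ b) a⁻¹`. -/
def lamop (a b : A) : A := circ a b * a⁻¹

end SkewBrace

namespace SkewBraceAux

open SkewBrace

variable {A : Type*} [SkewBrace A]

theorem lam_mul (a x y : A) : lam a (x * y) = lam a x * lam a y := by
  unfold lam; rw [brace]; group

theorem lam_one (a : A) : lam a 1 = 1 := by
  have h := lam_mul a 1 1
  rw [mul_one] at h
  exact left_eq_mul.mp h

theorem lam_inv (a x : A) : lam a x⁻¹ = (lam a x)⁻¹ := by
  have h := lam_mul a x x⁻¹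
  rw [mul_inv_cancel, lam_one] at h
  exact eq_inv_of_mul_eq_one_right h.symm

theorem circ_inv (a b : A) : circ a b⁻¹ = a * (circ a b)⁻¹ * a := by
  have h := brace a b b⁻¹
  rw [mul_inv_cancel, circ_one] at h
  calc circ a b⁻¹ = (circ a b * a⁻¹)⁻¹ * (circ a b * a⁻¹ * circ a b⁻¹) := by group
    _ = (circ a b * a⁻¹)⁻¹ * a := by rw [← h]
    _ = a * (circ a b)⁻¹ * a := by group

theorem lam_circ (a b x : A) : lam (circ a b) x = lam a (lam b x) := by
  unfold lam
  rw [brace, circ_inv, circ_assoc]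
  group

theorem sinv_sinv (a : A) : sinv (sinv a) = a := by
  have h1 : circ a (circ (sinv a) (sinv (sinv a))) = circ a 1 := by
    rw [circ_sinv]
  rw [← circ_assoc, circ_sinv, one_circ, circ_one] at h1
  exact h1

theorem eq_sinv_of_circ_eq_one {x y : A} (h : circ x y = 1) : y = sinv x := by
  have h1 : circ (sinv x) (circ x y) = circ (sinv x) 1 := by rw [h]
  rwa [← circ_assoc, sinv_circ, one_circ, circ_one] at h1

theorem sinv_circ' (a b : A) : sinv (circ a b) = circ (sinv b) (sinv a) := by
  refine (eq_sinv_of_circ_eq_one ?_).symm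
  rw [circ_assoc, ← circ_assoc b, circ_sinv, one_circ, circ_sinv]

theorem star_eq (a b : A) : SkewBrace.star a b = lam a b * b⁻¹ := by
  unfold SkewBrace.star SkewBrace.lam; group

/-- The subgroup of fixed points of `λ_a`. -/
def fixedSubgroup (a : A) : Subgroup A where
  carrier := {z | lam a z = z}
  mul_mem' := by
    intro p q hp hq
    simp only [Set.mem_setOf_eq] at *
    rw [lam_mul, hp, hq]
  one_mem' := lam_one a
  inv_mem' := by
    intro p hp
    simp only [Set.mem_setOf_eq] at *
    rw [lam_inv, hp]

theorem mem_fixedSubgroup {a z : A} : z ∈ fixedSubgroup a ↔ lam a z = z := Iff.rfl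

end SkewBraceAux

open SkewBrace SkewBraceAux in
/-- If `A = B∘C` with `B`, `C` trivial sub-skew braces which are normal subgroups of
`(A,∘)` and right ideals in `A`, then `A*(A*A) = 1`. -/
theorem left_nilpotent_of_factorization {A : Type*} [SkewBrace A] (B C : Subgroup A)
    (hBcirc : ∀ x ∈ B, ∀ y ∈ B, circ x y ∈ B) (hBsinv : ∀ x ∈ B, sinv x ∈ B)
    (hCcirc : ∀ x ∈ C, ∀ y ∈ C, circ x y ∈ C) (hCsinv : ∀ x ∈ C, sinv x ∈ C)
    (hfact : ∀ a : A, ∃ b ∈ B, ∃ c ∈ C, a = circ b c)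
    (hBtriv : ∀ x ∈ B, ∀ y ∈ B, circ x y = x * y)
    (hCtriv : ∀ x ∈ C, ∀ y ∈ C, circ x y = x * y)
    (hBnorm : ∀ a : A, ∀ x ∈ B, circ (circ a x) (sinv a) ∈ B)
    (hCnorm : ∀ a : A, ∀ x ∈ C, circ (circ a x) (sinv a) ∈ C)
    (hBright : ∀ x ∈ B, ∀ a : A, lam x a * a⁻¹ ∈ B)
    (hCright : ∀ x ∈ C, ∀ a : A, lam x a * a⁻¹ ∈ C) :
    ∀ a : A, ∀ z ∈ Subgroup.closure {z : A | ∃ x y : A, z = star x y}, star a z = 1 := by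
  -- triviality, pointwise for `lam`
  have hBlam : ∀ x ∈ B, ∀ y ∈ B, lam x y = y := by
    intro x hx y hy; unfold SkewBrace.lam; rw [hBtriv x hx y hy]; group
  have hClam : ∀ x ∈ C, ∀ y ∈ C, lam x y = y := by
    intro x hx y hy; unfold SkewBrace.lam; rw [hCtriv x hx y hy]; group
  -- key conjugation lemma: for `c, c₂ ∈ C`, `λ_c (λ_{a'} c₂) = λ_{a'} c₂`
  have hMC : ∀ (a' c c₂ : A), c ∈ C → c₂ ∈ C → lam c (lam a' c₂) = lam a' c₂ := by
    intro a' c c₂ hc hc₂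
    have hβ : circ (circ (sinv a') c) a' ∈ C := by
      have := hCnorm (sinv a') c hc
      rwa [sinv_sinv] at this
    have hca : circ c a' = circ a' (circ (circ (sinv a') c) a') := by
      rw [← circ_assoc, ← circ_assoc, circ_sinv, one_circ]
    rw [← lam_circ, hca, lam_circ, hClam _ hβ c₂ hc₂]
  have hMB : ∀ (a' b b₂ : A), b ∈ B → b₂ ∈ B → lam b (lam a' b₂) = lam a' b₂ := by
    intro a' b b₂ hb hb₂
    have hβ : circ (circ (sinv a') b) a' ∈ B := by
      have := hBnorm (sinv a') b hb
      rwa [sinv_sinv] at this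
    have hca : circ b a' = circ a' (circ (circ (sinv a') b) a') := by
      rw [← circ_assoc, ← circ_assoc, circ_sinv, one_circ]
    rw [← lam_circ, hca, lam_circ, hBlam _ hβ b₂ hb₂]
  -- multiplicative factorizations
  have factBC : ∀ w : A, ∃ b ∈ B, ∃ c ∈ C, w = b * c := by
    intro w
    obtain ⟨b, hb, c, hc, rfl⟩ := hfact w
    refine ⟨b * (lam b c * c⁻¹), B.mul_mem hb (hBright b hb c), c, hc, ?_⟩
    unfold SkewBrace.lam; group
  have factCB : ∀ w : A, ∃ c ∈ C, ∃ b ∈ B, w = c * b := by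
    intro w
    obtain ⟨b, hb, c, hc, hw⟩ := hfact (sinv w)
    have hw2 : w = circ (sinv c) (sinv b) := by
      rw [← sinv_circ', ← hw, sinv_sinv]
    refine ⟨sinv c * (lam (sinv c) (sinv b) * (sinv b)⁻¹),
      C.mul_mem (hCsinv c hc) (hCright _ (hCsinv c hc) _), sinv b, hBsinv b hb, ?_⟩
    rw [hw2]; unfold SkewBrace.lam; group
  -- decomposition of star elements
  have decomp : ∀ x y : A, ∃ b₁ ∈ B, ∃ c₁ ∈ C, ∃ c₂ ∈ C, ∃ b₂ ∈ B,
      star x y = (lam b₁ c₂ * c₂⁻¹) * (lam c₁ b₂ * b₂⁻¹) := by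
    intro x y
    obtain ⟨b₁, hb₁, c₁, hc₁, hx⟩ := hfact x
    obtain ⟨c₂, hc₂, β, hβ, hw⟩ := factCB (lam c₁ y)
    obtain ⟨b₂, hb₂, c₃, hc₃, hy⟩ := factBC y
    refine ⟨b₁, hb₁, c₁, hc₁, c₂, hc₂, b₂, hb₂, ?_⟩
    have e1 : star x y = (lam b₁ (lam c₁ y) * (lam c₁ y)⁻¹) * (lam c₁ y * y⁻¹) := by
      rw [star_eq, hx, lam_circ]; group
    have e2 : lam b₁ (lam c₁ y) * (lam c₁ y)⁻¹ = lam b₁ c₂ * c₂⁻¹ := by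
      rw [hw, lam_mul, hBlam b₁ hb₁ β hβ]; group
    have e3 : lam c₁ y * y⁻¹ = lam c₁ b₂ * b₂⁻¹ := by
      conv_lhs => rw [hy]
      rw [lam_mul, hClam c₁ hc₁ c₃ hc₃]; group
    rw [e1, e2, e3]
  -- λ_c and λ_b fix every star element
  have KeyC : ∀ c ∈ C, ∀ x y : A, lam c (star x y) = star x y := by
    intro c hc x y
    obtain ⟨b₁, hb₁, c₁, hc₁, c₂, hc₂, b₂, hb₂, he⟩ := decomp x y
    rw [he, lam_mul,
      hClam c hc _ (hCright c₁ hc₁ b₂),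
      lam_mul, lam_inv, hMC b₁ c c₂ hc hc₂, hClam c hc c₂ hc₂]
  have KeyB : ∀ b ∈ B, ∀ x y : A, lam b (star x y) = star x y := by
    intro b hb x y
    obtain ⟨b₁, hb₁, c₁, hc₁, c₂, hc₂, b₂, hb₂, he⟩ := decomp x y
    rw [he, lam_mul,
      hBlam b hb _ (hBright b₁ hb₁ c₂),
      lam_mul, lam_inv, hMB c₁ b b₂ hb hb₂, hBlam b hb b₂ hb₂]
  -- conclusion
  intro a z hz
  obtain ⟨b, hb, c, hc, ha⟩ := hfact a
  have hK : Subgroup.closure {z : A | ∃ x y : A, z = star x y} ≤ fixedSubgroup a := by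
    rw [Subgroup.closure_le]
    rintro z ⟨x, y, rfl⟩
    show lam a (star x y) = star x y
    rw [ha, lam_circ, KeyC c hc x y, KeyB b hb x y]
  have hfix : lam a z = z := hK hz
  rw [star_eq, hfix, mul_inv_cancel]
end

section
/- Let A be a skew brace with A = B·C, where B and C are trivial sub-skew braces, both B and C are normal subgroups of (A,·), and both are left ideals in A. Then (A*A)*A = 1, i.e., A is right nilpotent of index at most 3. -/
namespace SkewBrace

variable {A : Type*} [SkewBrace A]

lemma lam_one_act (x : A) : lam (1 : A) x = x := by
  simp [lam, one_circ]

lemma lam_mul (a x y : A) : lam a (x * y) = lam a x * lam a y := by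
  simp [lam, brace, mul_assoc]

lemma circ_eq_mul_lam (a b : A) : circ a b = a * lam a b := by
  simp [lam]

lemma lam_circ (a b x : A) : lam (circ a b) x = lam a (lam b x) := by
  have h : circ a b * a⁻¹ * circ a b⁻¹ = a := by
    rw [← brace, mul_inv_cancel, circ_one]
  have h4 : circ a b * (a⁻¹ * circ a b⁻¹ * a⁻¹) = 1 := by
    rw [show circ a b * (a⁻¹ * circ a b⁻¹ * a⁻¹) = circ a b * a⁻¹ * circ a b⁻¹ * a⁻¹ by group,
      h, mul_inv_cancel]
  have hinv : (circ a b)⁻¹ = a⁻¹ * circ a b⁻¹ * a⁻¹ := inv_eq_of_mul_eq_one_right h4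
  calc lam (circ a b) x = (circ a b)⁻¹ * circ a (circ b x) := by rw [lam, circ_assoc]
    _ = a⁻¹ * circ a b⁻¹ * a⁻¹ * circ a (circ b x) := by rw [hinv]
    _ = lam a (lam b x) := by simp only [lam, brace]; group

lemma lam_lam_sinv (a x : A) : lam a (lam (sinv a) x) = x := by
  rw [← lam_circ, circ_sinv, lam_one_act]

lemma lam_sinv_lam (a x : A) : lam (sinv a) (lam a x) = x := by
  rw [← lam_circ, sinv_circ, lam_one_act]

lemma lam_mul_left (u w x : A) : lam (u * w) x = lam u (lam (lam (sinv u) w) x) := by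
  have h : u * w = circ u (lam (sinv u) w) := by rw [circ_eq_mul_lam, lam_lam_sinv]
  rw [h, lam_circ]

/-- The key lemma: every generator `x * y` of `A*A` acts trivially via `λ`. -/
theorem starKey {A : Type*} [SkewBrace A] (B C : Subgroup A)
    (hfact : ∀ a : A, ∃ b ∈ B, ∃ c ∈ C, a = b * c)
    (hBtriv : ∀ x ∈ B, ∀ y ∈ B, circ x y = x * y)
    (hCtriv : ∀ x ∈ C, ∀ y ∈ C, circ x y = x * y)
    (hBnorm : B.Normal) (hCnorm : C.Normal)
    (hBleft : ∀ a : A, ∀ x ∈ B, lam a x ∈ B)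
    (hCleft : ∀ a : A, ∀ x ∈ C, lam a x ∈ C) :
    ∀ x y a : A, lam (star x y) a = a := by
  have hBlam : ∀ b ∈ B, ∀ b' ∈ B, lam b b' = b' := by
    intro b hb b' hb'
    rw [lam, hBtriv b hb b' hb', inv_mul_cancel_left]
  have hClam : ∀ c ∈ C, ∀ c' ∈ C, lam c c' = c' := by
    intro c hc c' hc'
    rw [lam, hCtriv c hc c' hc', inv_mul_cancel_left]
  have hBhom : ∀ b1 ∈ B, ∀ b2 ∈ B, ∀ t : A, lam (b1 * b2) t = lam b1 (lam b2 t) := by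
    intro b1 h1 b2 h2 t
    rw [← hBtriv b1 h1 b2 h2, lam_circ]
  have hChom : ∀ c1 ∈ C, ∀ c2 ∈ C, ∀ t : A, lam (c1 * c2) t = lam c1 (lam c2 t) := by
    intro c1 h1 c2 h2 t
    rw [← hCtriv c1 h1 c2 h2, lam_circ]
  -- Lemma 1 : λ_{λ_b(c)} = λ_c on B
  have lemma1 : ∀ b ∈ B, ∀ c ∈ C, ∀ β ∈ B, lam (lam b c) β = lam c β := by
    intro b hb c hc β hβ
    have hconj : (lam b c)⁻¹ * b * lam b c ∈ B := by
      simpa using hBnorm.conj_mem b hb (lam b c)⁻¹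
    have hβhat : lam (sinv (lam b c)) ((lam b c)⁻¹ * b * lam b c) ∈ B := hBleft _ _ hconj
    have e1 : lam (circ b c) β = lam b (lam c β) := lam_circ b c β
    have e2 : circ b c = lam b c * ((lam b c)⁻¹ * b * lam b c) := by
      rw [circ_eq_mul_lam]; group
    rw [e2, lam_mul_left, hBlam _ hβhat β hβ] at e1
    rw [e1, hBlam b hb _ (hBleft c β hβ)]
  -- Lemma 1' : λ_{λ_c(b)} = λ_b on C
  have lemma1' : ∀ c ∈ C, ∀ b ∈ B, ∀ γ ∈ C, lam (lam c b) γ = lam b γ := by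
    intro c hc b hb γ hγ
    have hconj : (lam c b)⁻¹ * c * lam c b ∈ C := by
      simpa using hCnorm.conj_mem c hc (lam c b)⁻¹
    have hγhat : lam (sinv (lam c b)) ((lam c b)⁻¹ * c * lam c b) ∈ C := hCleft _ _ hconj
    have e1 : lam (circ c b) γ = lam c (lam b γ) := lam_circ c b γ
    have e2 : circ c b = lam c b * ((lam c b)⁻¹ * c * lam c b) := by
      rw [circ_eq_mul_lam]; group
    rw [e2, lam_mul_left, hClam _ hγhat γ hγ] at e1
    rw [e1, hClam c hc _ (hCleft b γ hγ)]
  -- Lemma 2 : λ_{λ_u(β)} = λ_β on C, for any u, β ∈ B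
  have lemma2 : ∀ u : A, ∀ β ∈ B, ∀ γ ∈ C, lam (lam u β) γ = lam β γ := by
    intro u β hβ γ hγ
    obtain ⟨b₁, hb₁, c₂, hc₂, hu⟩ := hfact u
    have hc₁ : lam (sinv b₁) c₂ ∈ C := hCleft _ _ hc₂
    have h1 : lam u β = lam (lam (sinv b₁) c₂) β := by
      rw [hu, lam_mul_left]; exact hBlam b₁ hb₁ _ (hBleft _ _ hβ)
    rw [h1]
    exact lemma1' _ hc₁ β hβ γ hγ
  -- Lemma 2' : λ_{λ_u(γ)} = λ_γ on B, for any u, γ ∈ C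
  have lemma2' : ∀ u : A, ∀ γ ∈ C, ∀ β ∈ B, lam (lam u γ) β = lam γ β := by
    intro u γ hγ β hβ
    obtain ⟨b₁, hb₁, c₂, hc₂, hu⟩ := hfact u
    have hc₁ : lam (sinv b₁) c₂ ∈ C := hCleft _ _ hc₂
    have h1 : lam u γ = lam b₁ γ := by
      rw [hu, lam_mul_left, hClam _ hc₁ γ hγ]
    rw [h1]
    exact lemma1 b₁ hb₁ γ hγ β hβ
  -- Main computation, abstracted
  have main : ∀ p b' : A, p ∈ B → b' ∈ B → ∀ m ∈ C,
      (∀ β ∈ B, lam m β = β) → (∀ δ ∈ C, lam p δ = lam b' δ) →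
      ∀ a : A, lam (p * m * b'⁻¹) a = a := by
    intro p b' hp hb' m hm hmB hpC a
    have hexp : ∀ t : A, lam (p * m * b'⁻¹) t
        = lam p (lam (lam (sinv p) m)
            (lam (lam (sinv (lam (sinv p) m)) (lam (sinv p) b'⁻¹)) t)) := by
      intro t
      rw [mul_assoc, lam_mul_left p (m * b'⁻¹) t, lam_mul (sinv p) m b'⁻¹, lam_mul_left]
    have hm₁ : lam (sinv p) m ∈ C := hCleft _ _ hm
    have hs₂B : lam (sinv (lam (sinv p) m)) (lam (sinv p) b'⁻¹) ∈ B :=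
      hBleft _ _ (hBleft _ _ (B.inv_mem hb'))
    have hB0 : ∀ β ∈ B, lam (p * m * b'⁻¹) β = β := by
      intro β hβ
      rw [hexp β, hBlam _ hs₂B β hβ, lemma2' (sinv p) m hm β hβ, hmB β hβ, hBlam p hp β hβ]
    have hC0 : ∀ γ ∈ C, lam (p * m * b'⁻¹) γ = γ := by
      intro γ hγ
      rw [hexp γ]
      have hs₂eq : lam (lam (sinv (lam (sinv p) m)) (lam (sinv p) b'⁻¹)) γ = lam b'⁻¹ γ := by
        rw [← lam_circ]
        exact lemma2 _ b'⁻¹ (B.inv_mem hb') γ hγ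
      rw [hs₂eq, hClam _ hm₁ _ (hCleft _ _ hγ), hpC _ (hCleft _ _ hγ),
        ← hBhom b' hb' b'⁻¹ (B.inv_mem hb'), mul_inv_cancel, lam_one_act]
    obtain ⟨b₀, hb₀, c₀, hc₀, ha⟩ := hfact a
    rw [ha, lam_mul, hB0 b₀ hb₀, hC0 c₀ hc₀]
  -- now the statement
  intro x y a
  obtain ⟨b, hb, c₂, hc₂, hx⟩ := hfact x
  obtain ⟨b', hb', c', hc', hy⟩ := hfact y
  subst hx; subst hy
  have hc₁ : lam (sinv b) c₂ ∈ C := hCleft _ _ hc₂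
  have hsx : star (b * c₂) (b' * c')
      = lam (lam (sinv b) c₂) b' * (lam b c' * c'⁻¹) * b'⁻¹ := by
    have h0 : star (b * c₂) (b' * c') = lam (b * c₂) (b' * c') * (b' * c')⁻¹ := by
      rw [star, lam]
    rw [h0, lam_mul_left, lam_mul, lam_mul, hClam _ hc₁ c' hc',
      hBlam b hb _ (hBleft _ _ hb'), mul_inv_rev]
    group
  rw [hsx]
  refine main _ b' (hBleft _ _ hb') hb' (lam b c' * c'⁻¹)
    (C.mul_mem (hCleft _ _ hc') (C.inv_mem hc')) ?_ ?_ a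
  · intro β hβ
    rw [hChom _ (hCleft b c' hc') _ (C.inv_mem hc') β,
      lemma1 b hb c' hc' _ (hBleft _ _ hβ),
      ← hChom c' hc' c'⁻¹ (C.inv_mem hc'), mul_inv_cancel, lam_one_act]
  · intro δ hδ
    exact lemma2 _ b' hb' δ hδ

end SkewBrace
open SkewBrace in
/-- If `A = B·C` with `B`, `C` trivial sub-skew braces which are normal subgroups of
`(A,·)` and left ideals in `A`, then `(A*A)*A = 1`. -/
theorem right_nilpotent_of_factorization {A : Type*} [SkewBrace A] (B C : Subgroup A)
    (hBcirc : ∀ x ∈ B, ∀ y ∈ B, circ x y ∈ B) (hBsinv : ∀ x ∈ B, sinv x ∈ B)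
    (hCcirc : ∀ x ∈ C, ∀ y ∈ C, circ x y ∈ C) (hCsinv : ∀ x ∈ C, sinv x ∈ C)
    (hfact : ∀ a : A, ∃ b ∈ B, ∃ c ∈ C, a = b * c)
    (hBtriv : ∀ x ∈ B, ∀ y ∈ B, circ x y = x * y)
    (hCtriv : ∀ x ∈ C, ∀ y ∈ C, circ x y = x * y)
    (hBnorm : B.Normal) (hCnorm : C.Normal)
    (hBleft : ∀ a : A, ∀ x ∈ B, lam a x ∈ B)
    (hCleft : ∀ a : A, ∀ x ∈ C, lam a x ∈ C) :
    ∀ z ∈ Subgroup.closure {z : A | ∃ x y : A, z = star x y}, ∀ a : A, star z a = 1 := by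
  have key := SkewBrace.starKey B C hfact hBtriv hCtriv hBnorm hCnorm hBleft hCleft
  intro z hz a
  have hK : ∀ t : A, lam z t = t := by
    refine Subgroup.closure_induction (p := fun g _ => ∀ t : A, lam g t = t)
      ?_ ?_ ?_ ?_ hz
    · rintro g ⟨u, v, rfl⟩ t
      exact key u v t
    · intro t; exact lam_one_act t
    · intro u v _ _ pu pv t
      have hsu : ∀ s : A, lam (sinv u) s = s := by
        intro s
        have h := lam_sinv_lam u s
        rwa [pu s] at h
      rw [lam_mul_left, hsu v, pv t, pu t]
    · intro u _ pu t
      have hsu : ∀ s : A, lam (sinv u) s = s := by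
        intro s
        have h := lam_sinv_lam u s
        rwa [pu s] at h
      have h := lam_mul_left u u⁻¹ t
      rw [mul_inv_cancel, lam_one_act, hsu u⁻¹, pu (lam u⁻¹ t)] at h
      exact h.symm
  have h := hK a
  rw [lam] at h
  rw [SkewBrace.star, h, mul_inv_cancel]
end
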